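/- Let P be a D-valued partial lattice with (Id∧). Then the pointwise meet of any two affine lower functions on P is again an affine lower function on P. In particular, the set of affine ideal functions on P is closed under pointwise meet. -/

import Mathlib

open Finset

/-- The Boolean value `⟦x = y⟧ = ⟦x ≤ y⟧ ⊓ ⟦y ≤ x⟧` in a `D`-valued poset. -/
def eqv {D P : Type*} [DistribLattice D] (le : P → P → D) (x y : P) : D :=
  le x y ⊓ le y x

/-- The Boolean value `⟦x ∈ Z⟧ = ⋁_{z ∈ Z} ⟦x = z⟧` for a nonempty finite `Z`. -/
def memv {D P : Type*} [DistribLattice D] (le : P → P → D) (x : P)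
    (Z : Finset P) (hZ : Z.Nonempty) : D :=
  Z.sup' hZ (eqv le x)

/-- The Boolean value `⟦X ⊆ Y⟧ = ⋀_{x ∈ X} ⟦x ∈ Y⟧`. -/
def subv {D P : Type*} [DistribLattice D] (le : P → P → D)
    (X : Finset P) (hX : X.Nonempty) (Y : Finset P) (hY : Y.Nonempty) : D :=
  X.inf' hX fun x => memv le x Y hY

/-- The Boolean value `⟦X = Y⟧ = ⟦X ⊆ Y⟧ ⊓ ⟦Y ⊆ X⟧`. -/
def setEqv {D P : Type*} [DistribLattice D] (le : P → P → D)
    (X : Finset P) (hX : X.Nonempty) (Y : Finset P) (hY : Y.Nonempty) : D :=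
  subv le X hX Y hY ⊓ subv le Y hY X hX

/-- A `D`-valued poset: a set `P` with Boolean values `⟦a ≤ b⟧ ∈ D` satisfying
reflexivity and transitivity. -/
structure DValuedPoset (D P : Type*) [DistribLattice D] [OrderTop D] where
  le : P → P → D
  le_refl : ∀ a, le a a = ⊤
  le_trans : ∀ a b c, le a b ⊓ le b c ≤ le a c

/-- A `D`-valued partial lattice: a `D`-valued poset with Boolean values
`⟦a = ⋁X⟧` and `⟦a = ⋀X⟧` satisfying conditions (1), (1*), (2), (2*), (3), (3*). -/
structure DValuedPartialLattice (D P : Type*) [DistribLattice D] [OrderTop D]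
    extends DValuedPoset D P where
  jn : P → Finset P → D
  mt : P → Finset P → D
  jn_le : ∀ a b (X : Finset P) (hX : X.Nonempty),
    jn a X ⊓ le a b = jn a X ⊓ X.inf' hX fun x => le x b
  mt_le : ∀ a b (X : Finset P) (hX : X.Nonempty),
    mt a X ⊓ le b a = mt a X ⊓ X.inf' hX fun x => le b x
  jn_congr : ∀ a (X Y : Finset P) (hX : X.Nonempty) (hY : Y.Nonempty),
    jn a X ⊓ setEqv le X hX Y hY ≤ jn a Y
  mt_congr : ∀ a (X Y : Finset P) (hX : X.Nonempty) (hY : Y.Nonempty),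
    mt a X ⊓ setEqv le X hX Y hY ≤ mt a Y
  jn_eq : ∀ a b (X : Finset P), jn a X ⊓ eqv le a b ≤ jn b X
  mt_eq : ∀ a b (X : Finset P), mt a X ⊓ eqv le a b ≤ mt b X

variable {D P : Type*} [DistribLattice D] [OrderTop D]

/-- An affine lower function: a map of the form `x ↦ ⋁_{i<n}(⟦x≤u_i⟧ ⊓ α_i)` with `n ≥ 1`. -/
def IsAffineLowerFct (V : DValuedPartialLattice D P) (f : P → D) : Prop :=
  ∃ (n : ℕ) (hn : 0 < n) (u : Fin n → P) (α : Fin n → D), ∀ x,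
    f x = (Finset.univ : Finset (Fin n)).sup' ⟨⟨0, hn⟩, Finset.mem_univ _⟩
      fun i => V.le x (u i) ⊓ α i

/-- A lower function: `f(y) ⊓ ⟦x≤y⟧ ≤ f(x)`. -/
def IsLowerFct (V : DValuedPartialLattice D P) (f : P → D) : Prop :=
  ∀ x y, f y ⊓ V.le x y ≤ f x

/-- An ideal function: a lower function with `⟦a=⋁X⟧ ⊓ ⋀_{x∈X}f(x) ≤ f(a)`. -/
def IsIdealFct (V : DValuedPartialLattice D P) (f : P → D) : Prop :=
  IsLowerFct V f ∧
    ∀ (a : P) (X : Finset P) (hX : X.Nonempty), V.jn a X ⊓ X.inf' hX f ≤ f a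

/-- `P` has (Id∧): every pair of elements of `P` has an (Id∧)-sample. -/
def HasIdMeet (V : DValuedPartialLattice D P) : Prop :=
  ∀ a b : P, ∃ (U : Finset P) (hU : U.Nonempty), ∀ x,
    V.le x a ⊓ V.le x b =
      U.sup' hU fun w => V.le x w ⊓ (V.le w a ⊓ V.le w b)

/-! Distributing the meet, `f ⊓ g` is the join over pairs of generators of
`⟦x≤u⟧ ⊓ ⟦x≤v⟧ ⊓ (α ⊓ β)`. An (Id∧)-sample `U` of `{u, v}` rewrites `⟦x≤u⟧ ⊓ ⟦x≤v⟧` as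
`⋁_{w∈U} ⟦x≤w⟧ ⊓ (⟦w≤u⟧ ⊓ ⟦w≤v⟧)`, so each pair contributes finitely many generators
`⟦x≤w⟧ ⊓ (⟦w≤u⟧ ⊓ ⟦w≤v⟧ ⊓ α ⊓ β)`. -/

lemma isAffineLowerFct_iff_exists_finset (V : DValuedPartialLattice D P) (f : P → D) :
    IsAffineLowerFct V f ↔ ∃ (S : Finset (P × D)) (hS : S.Nonempty),
      ∀ x, f x = S.sup' hS fun p => V.le x p.1 ⊓ p.2 := by
  classical
  constructor
  · rintro ⟨n, hn, u, α, hf⟩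
    refine ⟨univ.image fun i => (u i, α i), ⟨_, mem_image_of_mem _ (mem_univ ⟨0, hn⟩)⟩, fun x => ?_⟩
    rw [hf x]
    exact (sup'_image (s := univ) (f := fun i => (u i, α i)) _
      fun p : P × D => V.le x p.1 ⊓ p.2).symm
  · rintro ⟨S, hS, hf⟩
    let e : Fin S.card → P × D := fun i => S.equivFin.symm i
    refine ⟨S.card, hS.card_pos, fun i => (e i).1, fun i => (e i).2, fun x => ?_⟩
    rw [hf x]
    apply le_antisymm
    · refine sup'_le _ _ fun p hp => ?_
      simpa [e] using le_sup' (fun i => V.le x (e i).1 ⊓ (e i).2) (mem_univ (S.equivFin ⟨p, hp⟩))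
    · exact sup'_le _ _ fun i _ => le_sup' (fun p : P × D => V.le x p.1 ⊓ p.2) (S.equivFin.symm i).2

lemma le_inf_inf_le_inf_eq_sup' (V : DValuedPartialLattice D P) {a b : P} {U : Finset P}
    (hU : U.Nonempty)
    (hsample : ∀ x, V.le x a ⊓ V.le x b = U.sup' hU fun w => V.le x w ⊓ (V.le w a ⊓ V.le w b))
    (α β : D) (x : P) :
    V.le x a ⊓ α ⊓ (V.le x b ⊓ β) =
      U.sup' hU fun w => V.le x w ⊓ (V.le w a ⊓ V.le w b ⊓ (α ⊓ β)) := by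
  calc V.le x a ⊓ α ⊓ (V.le x b ⊓ β) = (V.le x a ⊓ V.le x b) ⊓ (α ⊓ β) := by ac_rfl
    _ = _ := by
      rw [hsample, sup'_inf_distrib_right]
      exact sup'_congr hU rfl fun w _ => inf_assoc ..

lemma IsAffineLowerFct.inf {V : DValuedPartialLattice D P} (hIdM : HasIdMeet V) {f g : P → D}
    (hf : IsAffineLowerFct V f) (hg : IsAffineLowerFct V g) :
    IsAffineLowerFct V fun x => f x ⊓ g x := by
  classical
  rw [isAffineLowerFct_iff_exists_finset] at hf hg ⊢
  obtain ⟨S, hS, hfS⟩ := hf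
  obtain ⟨T, hT, hgT⟩ := hg
  choose U hU hsample using hIdM
  let gens : (P × D) × (P × D) → Finset (P × D) := fun ⟨⟨a, α⟩, ⟨b, β⟩⟩ =>
    (U a b).image fun w => (w, V.le w a ⊓ V.le w b ⊓ (α ⊓ β))
  have hgens : ∀ pq, (gens pq).Nonempty := fun _ => (hU _ _).image _
  refine ⟨(S ×ˢ T).biUnion gens, (hS.product hT).biUnion fun pq _ => hgens pq, fun x => ?_⟩
  rw [sup'_biUnion _ (hS.product hT) hgens, hfS, hgT, sup'_inf_sup']
  refine sup'_congr _ rfl fun ⟨⟨a, α⟩, ⟨b, β⟩⟩ _ => ?_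
  rw [le_inf_inf_le_inf_eq_sup' V (hU a b) (hsample a b), sup'_image]
  rfl

lemma IsLowerFct.inf {V : DValuedPartialLattice D P} {f g : P → D}
    (hf : IsLowerFct V f) (hg : IsLowerFct V g) : IsLowerFct V fun x => f x ⊓ g x :=
  fun x y => le_inf ((inf_le_inf_right _ inf_le_left).trans (hf x y))
    ((inf_le_inf_right _ inf_le_right).trans (hg x y))

lemma IsIdealFct.inf {V : DValuedPartialLattice D P} {f g : P → D}
    (hf : IsIdealFct V f) (hg : IsIdealFct V g) : IsIdealFct V fun x => f x ⊓ g x := by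
  refine ⟨hf.1.inf hg.1, fun a X hX => le_inf ?_ ?_⟩
  · exact (inf_le_inf_left _ (inf'_mono_fun fun _ _ => inf_le_left)).trans (hf.2 a X hX)
  · exact (inf_le_inf_left _ (inf'_mono_fun fun _ _ => inf_le_right)).trans (hg.2 a X hX)

theorem affineLower_inf_closed_general
    (V : DValuedPartialLattice D P) (hIdM : HasIdMeet V) :
    (∀ f g : P → D, IsAffineLowerFct V f → IsAffineLowerFct V g →
      IsAffineLowerFct V fun x => f x ⊓ g x) ∧
    (∀ f g : P → D,
      IsAffineLowerFct V f ∧ IsIdealFct V f →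
      IsAffineLowerFct V g ∧ IsIdealFct V g →
      IsAffineLowerFct V (fun x => f x ⊓ g x) ∧ IsIdealFct V fun x => f x ⊓ g x) :=
  ⟨fun _ _ hf hg => hf.inf hIdM hg,
    fun _ _ hf hg => ⟨hf.1.inf hIdM hg.1, hf.2.inf hg.2⟩⟩

/-- if the `D`-valued partial lattice `P` has (Id∧), then the pointwise meet
of two affine lower functions is again an affine lower function; in particular the affine
ideal functions on `P` are closed under pointwise meet. -/
theorem affineLower_inf_closed [Nonempty P]
    (V : DValuedPartialLattice D P) (hIdM : HasIdMeet V) :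
    (∀ f g : P → D, IsAffineLowerFct V f → IsAffineLowerFct V g →
      IsAffineLowerFct V fun x => f x ⊓ g x) ∧
    (∀ f g : P → D,
      IsAffineLowerFct V f ∧ IsIdealFct V f →
      IsAffineLowerFct V g ∧ IsIdealFct V g →
      IsAffineLowerFct V (fun x => f x ⊓ g x) ∧ IsIdealFct V fun x => f x ⊓ g x) :=
  affineLower_inf_closed_general V hIdM
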